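/- arXiv:math/0111287 — 3 statements merged into one kernel-verified Lean document; each statement's English description precedes it below -/
import Mathlib

section
/- Let A and Y be topological spaces, n ≥ 0, and let A × Sⁿ → Y be a continuous map. Let Z be the pushout of Y ← A × Sⁿ → A × D^{n+1} (along the inclusion Sⁿ ⊆ D^{n+1}). Then the canonical map Y → Z is injective, and the inclusion Y ⊆ Z is relatively T₁. -/
noncomputable section

universe u

open scoped Topology
open CategoryTheory CategoryTheory.Limits Opposite Simplicial

section TopPushout

/-- The pushout `A ∪_P B` of a span `A ← P → B` in the category of all topological
spaces, constructed as a quotient of the disjoint union `A ⊕ B`. -/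
def TopPushout {P A B : Type u} [TopologicalSpace P] [TopologicalSpace A]
    [TopologicalSpace B] (f : P → A) (g : P → B) : Type u :=
  Quot (fun x y : A ⊕ B => ∃ p : P, x = Sum.inl (f p) ∧ y = Sum.inr (g p))

instance {P A B : Type u} [TopologicalSpace P] [TopologicalSpace A] [TopologicalSpace B]
    (f : P → A) (g : P → B) : TopologicalSpace (TopPushout f g) :=
  inferInstanceAs (TopologicalSpace (Quot _))

/-- The first structure map `A → A ∪_P B` of a pushout. -/
def TopPushout.inl {P A B : Type u} [TopologicalSpace P] [TopologicalSpace A]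
    [TopologicalSpace B] (f : P → A) (g : P → B) : C(A, TopPushout f g) :=
  ⟨fun a => Quot.mk _ (Sum.inl a), continuous_quot_mk.comp continuous_inl⟩

/-- The second structure map `B → A ∪_P B` of a pushout. -/
def TopPushout.inr {P A B : Type u} [TopologicalSpace P] [TopologicalSpace A]
    [TopologicalSpace B] (f : P → A) (g : P → B) : C(B, TopPushout f g) :=
  ⟨fun b => Quot.mk _ (Sum.inr b), continuous_quot_mk.comp continuous_inr⟩

end TopPushout

section TopPushoutMap

variable {P A B P' A' B' : Type u} [TopologicalSpace P] [TopologicalSpace A]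
  [TopologicalSpace B] [TopologicalSpace P'] [TopologicalSpace A'] [TopologicalSpace B']
  {f : P → A} {g : P → B} {f' : P' → A'} {g' : P' → B'}

/-- The map of pushouts induced by a map of spans. -/
def TopPushout.map (hA : C(A, A')) (hB : C(B, B')) (hP : P → P')
    (c1 : ∀ p, hA (f p) = f' (hP p)) (c2 : ∀ p, hB (g p) = g' (hP p)) :
    C(TopPushout f g, TopPushout f' g') where
  toFun := Quot.lift (fun x => Quot.mk _ (Sum.map hA hB x))
    (by
      rintro u v ⟨p, rfl, rfl⟩
      apply Quot.sound
      exact ⟨hP p, by simp [c1 p], by simp [c2 p]⟩)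
  continuous_toFun := continuous_quot_lift _
    (continuous_quot_mk.comp (hA.continuous.sumMap hB.continuous))

end TopPushoutMap

/-- A map `ι : Y → Z` (thought of as an inclusion of topological spaces) is *relatively T₁*
if for every open subset `U` of `Y` and every point `z` of `Z` not in the image of `U`,
there is an open set `W` of `Z` containing the image of `U` and avoiding `z`. -/
def IsRelativelyT1 {Y Z : Type*} [TopologicalSpace Y] [TopologicalSpace Z]
    (i : Y → Z) : Prop :=
  ∀ U : Set Y, IsOpen U → ∀ z : Z, z ∉ i '' U →
    ∃ W : Set Z, IsOpen W ∧ i '' U ⊆ W ∧ z ∉ W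

section PushoutRelT1

variable (n : ℕ)

/-- The closed unit disc `D^{n+1}` in `ℝ^{n+1}`. -/
def Disc : Type := Metric.closedBall (0 : EuclideanSpace ℝ (Fin n)) 1

instance : TopologicalSpace (Disc n) :=
  inferInstanceAs (TopologicalSpace (Metric.closedBall (0 : EuclideanSpace ℝ (Fin n)) 1))

/-- The unit sphere `Sⁿ` in `ℝ^{n+1}`, the boundary of `D^{n+1}`. -/
def Sphere : Type := Metric.sphere (0 : EuclideanSpace ℝ (Fin n)) 1

instance : TopologicalSpace (Sphere n) :=
  inferInstanceAs (TopologicalSpace (Metric.sphere (0 : EuclideanSpace ℝ (Fin n)) 1))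

/-- The inclusion `Sⁿ ⊆ D^{n+1}` of the boundary sphere in the closed disc. -/
def sphereInclusion : C(Sphere n, Disc n) :=
  ⟨Set.inclusion Metric.sphere_subset_closedBall, continuous_inclusion _⟩

/-!
An open set of a pushout is a pair of open sets of `Y` and of `A × D^{n+1}` with the same
trace on `A × Sⁿ`. Given an open `U ⊆ Y` and a point `z` of `A × D^{n+1}` off the boundary,
pair `U` with the set of points of norm larger than `‖z‖` whose radial projection to
`A × Sⁿ` lies in the preimage of `U`; this open set misses `z`. Boundary points are
already points of `Y`, and injectivity holds for any pushout along an injective map.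
-/

namespace TopPushout

open Topology

variable {P A B : Type u} [TopologicalSpace P] [TopologicalSpace A] [TopologicalSpace B]
  {f : P → A} {g : P → B}

theorem inl_apply_eq_inr_apply (p : P) : inl f g (f p) = inr f g (g p) :=
  Quot.sound ⟨p, rfl, rfl⟩

theorem exists_inl_eq_or_exists_inr_eq_of_notMem_range (z : TopPushout f g) :
    (∃ a, inl f g a = z) ∨ ∃ b ∉ Set.range g, inr f g b = z := by
  obtain ⟨x | b, rfl⟩ := Quot.exists_rep z
  · exact .inl ⟨x, rfl⟩
  · by_cases hb : b ∈ Set.range g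
    · obtain ⟨p, rfl⟩ := hb
      exact .inl ⟨f p, inl_apply_eq_inr_apply p⟩
    · exact .inr ⟨b, hb, rfl⟩

/-- Sending `g p` to `f p` and fixing every other point of `A ⊕ B` is constant on the classes
of the pushout relation and restricts to the identity on `A`. -/
theorem inl_injective (hg : Function.Injective g) : Function.Injective (inl f g) := by
  let r : A ⊕ B → A ⊕ B := Sum.elim Sum.inl (Function.extend g (Sum.inl ∘ f) Sum.inr)
  have hr : ∀ x y : A ⊕ B, (∃ p, x = Sum.inl (f p) ∧ y = Sum.inr (g p)) → r x = r y := by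
    rintro _ _ ⟨p, rfl, rfl⟩
    exact (hg.extend_apply (Sum.inl ∘ f) Sum.inr p).symm
  intro a a' h
  exact Sum.inl.inj (congrArg (Quot.lift r hr) h)

theorem exists_isOpen_preimage_inl_eq_and_preimage_inr_eq {U : Set A} {V : Set B}
    (hU : IsOpen U) (hV : IsOpen V) (hVU : g ⁻¹' V = f ⁻¹' U) :
    ∃ W : Set (TopPushout f g), IsOpen W ∧ inl f g ⁻¹' W = U ∧ inr f g ⁻¹' W = V := by
  let mem : TopPushout f g → Prop := Quot.lift (Sum.elim (· ∈ U) (· ∈ V)) (by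
    rintro _ _ ⟨p, rfl, rfl⟩
    exact propext (Set.ext_iff.mp hVU p).symm)
  refine ⟨{z | mem z}, ?_, rfl, rfl⟩
  exact isQuotientMap_quot_mk.isOpen_preimage.mp (isOpen_sum_iff.mpr ⟨hU, hV⟩)

theorem isRelativelyT1_inl (hf : Continuous f) (hg : IsInducing g)
    (hsep : ∀ O : Set P, IsOpen O → ∀ b ∉ Set.range g,
      ∃ V : Set B, IsOpen V ∧ g ⁻¹' V = O ∧ b ∉ V) :
    IsRelativelyT1 (inl f g) := by
  intro U hU z hz
  have hO : IsOpen (f ⁻¹' U) := hU.preimage hf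
  rcases exists_inl_eq_or_exists_inr_eq_of_notMem_range z with ⟨y, rfl⟩ | ⟨b, hb, rfl⟩
  · obtain ⟨V, hV, hVU⟩ := hg.isOpen_iff.mp hO
    obtain ⟨W, hW, hWU, -⟩ := exists_isOpen_preimage_inl_eq_and_preimage_inr_eq hU hV hVU
    refine ⟨W, hW, by rw [Set.image_subset_iff, hWU], fun hyW => hz ⟨y, ?_, rfl⟩⟩
    rw [← hWU]
    exact hyW
  · obtain ⟨V, hV, hVU, hbV⟩ := hsep _ hO b hb
    obtain ⟨W, hW, hWU, hWV⟩ := exists_isOpen_preimage_inl_eq_and_preimage_inr_eq hU hV hVU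
    refine ⟨W, hW, by rw [Set.image_subset_iff, hWU], fun hbW => hbV ?_⟩
    rw [← hWV]
    exact hbW

end TopPushout

section SphereInclusion

open Topology

variable {m : ℕ} {A : Type*} [TopologicalSpace A]

theorem isInducing_prodMap_sphereInclusion :
    IsInducing (Prod.map id (sphereInclusion m) : A × Sphere m → A × Disc m) :=
  IsInducing.id.prodMap (IsEmbedding.inclusion Metric.sphere_subset_closedBall).isInducing

theorem norm_lt_one_of_notMem_range_sphereInclusion {x : Disc m}
    (hx : x ∉ Set.range (sphereInclusion m)) : ‖x.1‖ < 1 :=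
  (mem_closedBall_zero_iff.mp x.2).lt_of_ne
    fun h => hx ⟨⟨x.1, mem_sphere_zero_iff_norm.mpr h⟩, rfl⟩

/-- `T` is an open set of `A × ℝᵐ` with trace `O` on `A × Sphere m`, and `V` consists of the
points of norm larger than `‖b‖` whose radial projection lies in `T`. -/
theorem exists_isOpen_preimage_prodMap_sphereInclusion_eq_and_notMem
    {O : Set (A × Sphere m)} (hO : IsOpen O) {b : A × Disc m}
    (hb : b ∉ Set.range (Prod.map id (sphereInclusion m))) :
    ∃ V : Set (A × Disc m),
      IsOpen V ∧ Prod.map id (sphereInclusion m) ⁻¹' V = O ∧ b ∉ V := by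
  obtain ⟨T, hT, hTO⟩ := (IsInducing.id.prodMap IsInducing.subtypeVal).isOpen_iff.mp hO
  have hb₁ : ‖b.2.1‖ < 1 :=
    norm_lt_one_of_notMem_range_sphereInclusion fun ⟨s, hs⟩ =>
      hb ⟨(b.1, s), Prod.ext rfl hs⟩
  have hval : Continuous fun q : A × Disc m => q.2.1 := continuous_subtype_val.comp continuous_snd
  let S : Set (A × Disc m) := {q | ‖b.2.1‖ < ‖q.2.1‖}
  let proj : A × Disc m → A × EuclideanSpace ℝ (Fin m) :=
    fun q => (q.1, ‖q.2.1‖⁻¹ • q.2.1)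
  have hproj : ContinuousOn proj S :=
    continuousOn_fst.prodMk <| (hval.norm.continuousOn.inv₀
      fun q hq => ((norm_nonneg _).trans_lt hq).ne').smul hval.continuousOn
  have hS : IsOpen S := isOpen_lt continuous_const hval.norm
  refine ⟨S ∩ proj ⁻¹' T, hproj.isOpen_inter_preimage hS hT, ?_,
    fun hbV => lt_irrefl ‖b.2.1‖ hbV.1⟩
  ext ⟨a, s⟩
  have hs : ‖s.1‖ = 1 := mem_sphere_zero_iff_norm.mp s.2
  change ‖b.2.1‖ < ‖s.1‖ ∧ (a, ‖s.1‖⁻¹ • s.1) ∈ T ↔ (a, s) ∈ O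
  rw [hs, inv_one, one_smul, ← hTO]
  exact and_iff_right hb₁

end SphereInclusion

/-- If `Z` is obtained from `Y` by attaching `A × D^{n+1}` along a map `A × Sⁿ → Y`, then
the canonical map `Y → Z` is injective and the inclusion `Y ⊆ Z` is relatively `T₁`. -/
theorem pushout_inl_injective_isRelativelyT1
    {A Y : Type} [TopologicalSpace A] [TopologicalSpace Y]
    (α : C(A × Sphere (n + 1), Y)) :
    Function.Injective
        (TopPushout.inl (⇑α)
          (fun q : A × Sphere (n + 1) => ((q.1, sphereInclusion (n + 1) q.2) : A × Disc (n + 1)))) ∧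
      IsRelativelyT1
        (TopPushout.inl (⇑α)
          (fun q : A × Sphere (n + 1) => ((q.1, sphereInclusion (n + 1) q.2) : A × Disc (n + 1)))) := by
  refine ⟨TopPushout.inl_injective (g := Prod.map id (sphereInclusion (n + 1))) ?_,
    TopPushout.isRelativelyT1_inl (g := Prod.map id (sphereInclusion (n + 1))) α.continuous
      isInducing_prodMap_sphereInclusion
      fun O hO b hb => exists_isOpen_preimage_prodMap_sphereInclusion_eq_and_notMem hO hb⟩
  exact Function.injective_id.prodMap (Set.inclusion_injective Metric.sphere_subset_closedBall)

end PushoutRelT1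

end
end

section
/- Let Y₁ ⊆ Y₂ ⊆ Y₃ ⊆ ⋯ be a sequence of relatively T₁ inclusions of topological spaces, and let K be a compact space. Then every continuous map f : K → colim_k Y_k factors through some Y_k. -/
/-!
Open sets of the colimit are the same as families of open sets `V j ⊆ Y j` with
`e j ⁻¹' V (j + 1) = V j`, so open sets of the colimit are built stage by stage. Since each `e j`
is an embedding, an open subset of `Y k` extends in this way, hence `Y k → colim` is an embedding
and a map into the colimit landing in `Y k` factors continuously through `Y k`.

It remains to see that a compact `s` lies in some stage. Otherwise choose `z k ∈ s` outside
`Y k`; a stage `Y j` contains only the `z n` with `n < j`. Relative T₁-ness lets the extension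
avoid, at each stage, the finitely many points `z n` with `n ≥ k` that lie there, so there is an
open `W k ⊇ Y k` missing all of them. The `W k` cover `s`, and the point `z N` with `N` beyond a
finite subcover lies in none of its members.
-/

noncomputable section

universe u

open scoped Topology
open CategoryTheory CategoryTheory.Limits Opposite Simplicial

section SeqColim

variable {Y : ℕ → Type u} [∀ k, TopologicalSpace (Y k)]

/-- The colimit (increasing union) of a sequence `Y₁ ⊆ Y₂ ⊆ ⋯` of inclusions, equipped
with the final topology. -/
def SeqColim (e : ∀ k, C(Y k, Y (k + 1))) : Type u :=
  Quot (fun x y : Σ k, Y k => ∃ (k : ℕ) (a : Y k), x = ⟨k, a⟩ ∧ y = ⟨k + 1, e k a⟩)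

instance (e : ∀ k, C(Y k, Y (k + 1))) : TopologicalSpace (SeqColim e) :=
  inferInstanceAs (TopologicalSpace (Quot _))

/-- The canonical map `Y k → colim Y` into the sequential colimit. -/
def SeqColim.ι (e : ∀ k, C(Y k, Y (k + 1))) (k : ℕ) : C(Y k, SeqColim e) :=
  ⟨fun a => Quot.mk _ ⟨k, a⟩, continuous_quot_mk.comp continuous_sigmaMk⟩

open Topology

theorem IsRelativelyT1.exists_isOpen_preimage_eq_disjoint {A B : Type*} [TopologicalSpace A]
    [TopologicalSpace B] {i : A → B} (hT1 : IsRelativelyT1 i) (hi : IsEmbedding i) {V : Set A}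
    (hV : IsOpen V) {F : Set B} (hF : F.Finite) (hVF : Disjoint (i '' V) F) :
    ∃ V' : Set B, IsOpen V' ∧ i ⁻¹' V' = V ∧ Disjoint V' F := by
  choose! W hWo hVW hbW using fun b hb => hT1 V hV b (Set.disjoint_right.mp hVF hb)
  obtain ⟨O, hO, rfl⟩ := hi.isOpen_iff.mp hV
  refine ⟨O ∩ ⋂ b ∈ F, W b, hO.inter (hF.isOpen_biInter hWo), ?_, ?_⟩
  · rw [Set.preimage_inter, Set.inter_eq_left, Set.preimage_iInter₂]
    exact Set.subset_iInter₂ fun b hb => Set.image_subset_iff.mp (hVW b hb)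
  · exact Set.disjoint_left.mpr fun b hb hbF => hbW b hbF (Set.mem_iInter₂.mp hb.2 b hbF)

namespace SeqColim

variable (e : ∀ k, C(Y k, Y (k + 1)))

theorem ι_succ (j : ℕ) (a : Y j) : ι e (j + 1) (e j a) = ι e j a :=
  (Quot.sound ⟨j, a, rfl, rfl⟩).symm

theorem preimage_ι_succ (j : ℕ) (s : Set (SeqColim e)) :
    e j ⁻¹' (ι e (j + 1) ⁻¹' s) = ι e j ⁻¹' s := by
  ext a
  simp only [Set.mem_preimage, ι_succ]

theorem exists_ι_eq (z : SeqColim e) : ∃ j a, ι e j a = z :=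
  let ⟨⟨j, a⟩, h⟩ := Quot.exists_rep z
  ⟨j, a, h⟩

theorem range_ι_mono : Monotone fun k => Set.range (ι e k) :=
  monotone_nat_of_le_succ fun j => by
    rintro _ ⟨a, rfl⟩
    exact ⟨e j a, ι_succ e j a⟩

theorem isOpen_iff {s : Set (SeqColim e)} : IsOpen s ↔ ∀ j, IsOpen (ι e j ⁻¹' s) :=
  isOpen_coinduced.trans isOpen_sigma_iff

theorem exists_preimage_ι_eq_of_compatible (V : ∀ j, Set (Y j))
    (hV : ∀ j, e j ⁻¹' V (j + 1) = V j) :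
    ∃ W : Set (SeqColim e), ∀ j, ι e j ⁻¹' W = V j :=
  ⟨{z | Quot.lift (fun x : Σ j, Y j => x.2 ∈ V x.1)
      (by rintro _ _ ⟨j, a, rfl, rfl⟩; exact congrArg (a ∈ ·) (hV j).symm) z}, fun _ => rfl⟩

def transport {i j : ℕ} (h : i ≤ j) : Y i → Y j :=
  Nat.leRecOn h fun {k} a => e k a

theorem preimage_transport_self {i : ℕ} (s : Set (Y i)) : transport e le_rfl ⁻¹' s = s := by
  ext a
  rw [Set.mem_preimage, transport, Nat.leRecOn_self]

theorem transport_succ_left {i j : ℕ} (h : i + 1 ≤ j) (a : Y i) :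
    transport e h (e i a) = transport e (Nat.le_of_succ_le h) a :=
  Nat.leRecOn_succ_left (next := fun {k} a => e k a) a _ h

theorem preimage_transport_succ {i j : ℕ} (h : i + 1 ≤ j) (s : Set (Y j)) :
    e i ⁻¹' (transport e h ⁻¹' s) = transport e (Nat.le_of_succ_le h) ⁻¹' s := by
  ext a
  simp only [Set.mem_preimage, transport_succ_left]

def extendFamily {k : ℕ} (U : Set (Y k)) (ext : ∀ j, Set (Y j) → Set (Y (j + 1))) :
    ∀ j, Set (Y j) :=
  Nat.rec (motive := fun j => Set (Y j)) (transport e (Nat.zero_le k) ⁻¹' U) fun j V =>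
    if h : j + 1 ≤ k then transport e h ⁻¹' U else ext j V

section extendFamily

variable {k : ℕ} (U : Set (Y k)) (ext : ∀ j, Set (Y j) → Set (Y (j + 1)))

theorem extendFamily_of_le {j : ℕ} (h : j ≤ k) :
    extendFamily e U ext j = transport e h ⁻¹' U := by
  cases j with
  | zero => rfl
  | succ j => exact dif_pos h

theorem extendFamily_succ_of_le {j : ℕ} (h : k ≤ j) :
    extendFamily e U ext (j + 1) = ext j (extendFamily e U ext j) :=
  dif_neg (by omega)

end extendFamily

theorem exists_preimage_ι_eq (Q : ∀ j, Set (Y j) → Prop)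
    (hpre : ∀ j V, Q (j + 1) V → Q j (e j ⁻¹' V))
    (hext : ∀ j V, Q j V → ∃ V', Q (j + 1) V' ∧ e j ⁻¹' V' = V)
    {k : ℕ} {U : Set (Y k)} (hU : Q k U) :
    ∃ W : Set (SeqColim e), ι e k ⁻¹' W = U ∧ ∀ j, Q j (ι e j ⁻¹' W) := by
  have hext' : ∀ j V, ∃ V', Q j V → Q (j + 1) V' ∧ e j ⁻¹' V' = V := fun j V =>
    (em (Q j V)).elim (fun h => (hext j V h).imp fun _ h' _ => h')
      fun h => ⟨∅, fun h' => absurd h' h⟩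
  choose ext hext using hext'
  have hQ_below : ∀ j (h : j ≤ k), Q j (transport e h ⁻¹' U) := by
    intro j h
    induction h using Nat.decreasingInduction with
    | self => rwa [preimage_transport_self]
    | of_succ j hj ih => simpa only [preimage_transport_succ] using hpre j _ ih
  have hQ : ∀ j, Q j (extendFamily e U ext j) := by
    intro j
    induction j with
    | zero => exact hQ_below 0 _
    | succ j ih =>
      by_cases h : j + 1 ≤ k
      · rw [extendFamily_of_le e U ext h]
        exact hQ_below _ h
      · rw [extendFamily_succ_of_le e U ext (by omega)]
        exact (hext j _ ih).1
  have hV : ∀ j, e j ⁻¹' extendFamily e U ext (j + 1) = extendFamily e U ext j := by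
    intro j
    by_cases h : j + 1 ≤ k
    · rw [extendFamily_of_le e U ext h, extendFamily_of_le e U ext (Nat.le_of_succ_le h),
        preimage_transport_succ]
    · rw [extendFamily_succ_of_le e U ext (by omega)]
      exact (hext j _ (hQ j)).2
  obtain ⟨W, hW⟩ := exists_preimage_ι_eq_of_compatible e _ hV
  refine ⟨W, ?_, fun j => (hW j).symm ▸ hQ j⟩
  rw [hW, extendFamily_of_le e U ext le_rfl, preimage_transport_self]

theorem ι_injective (he : ∀ j, Function.Injective (e j)) (k : ℕ) :
    Function.Injective (ι e k) := by
  intro a b hab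
  obtain ⟨W, hW, -⟩ := exists_preimage_ι_eq e (fun _ V => V.Subsingleton)
    (fun j _ hV => hV.preimage (he j))
    (fun j V hV => ⟨e j '' V, hV.image _, (he j).preimage_image V⟩)
    (Set.subsingleton_singleton (a := a))
  have ha : a ∈ ι e k ⁻¹' W := hW ▸ rfl
  have hb : b ∈ ι e k ⁻¹' W := show ι e k b ∈ W from hab ▸ ha
  rw [hW] at hb
  exact hb.symm

theorem isEmbedding_ι (he : ∀ j, IsEmbedding (e j)) (k : ℕ) : IsEmbedding (ι e k) := by
  refine ⟨⟨le_antisymm (ι e k).continuous.le_induced fun U hU => ?_⟩,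
    ι_injective e (fun j => (he j).injective) k⟩
  obtain ⟨W, hWU, hW⟩ := exists_preimage_ι_eq e (fun _ V => IsOpen V)
    (fun j _ hV => hV.preimage (e j).continuous) (fun j _ hV => (he j).isOpen_iff.mp hV) hU
  exact ⟨W, (isOpen_iff e).mpr hW, hWU⟩

theorem exists_isOpen_range_ι_subset_disjoint (hemb : ∀ j, IsEmbedding (e j))
    (hT1 : ∀ j, IsRelativelyT1 (e j)) {T : Set (SeqColim e)}
    (hT : ∀ j, (ι e j ⁻¹' T).Finite) {k : ℕ} (hk : Disjoint (Set.range (ι e k)) T) :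
    ∃ W, IsOpen W ∧ Set.range (ι e k) ⊆ W ∧ Disjoint W T := by
  obtain ⟨W, hWk, hW⟩ := exists_preimage_ι_eq e
    (fun j V => IsOpen V ∧ Disjoint V (ι e j ⁻¹' T))
    (fun j _ ⟨hVo, hVT⟩ => ⟨hVo.preimage (e j).continuous,
      preimage_ι_succ e j T ▸ hVT.preimage (e j)⟩)
    (fun j _ ⟨hVo, hVT⟩ => by
      obtain ⟨V', hV'o, hV', hV'T⟩ := (hT1 j).exists_isOpen_preimage_eq_disjoint (hemb j) hVo
        (hT (j + 1)) (Set.disjoint_image_left.mpr (preimage_ι_succ e j T ▸ hVT))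
      exact ⟨V', ⟨hV'o, hV'T⟩, hV'⟩)
    (U := Set.univ) ⟨isOpen_univ, by rwa [← Set.image_univ, Set.disjoint_image_left] at hk⟩
  refine ⟨W, (isOpen_iff e).mpr fun j => (hW j).1, ?_, Set.disjoint_left.mpr ?_⟩
  · rintro _ ⟨a, rfl⟩
    exact (hWk.symm ▸ Set.mem_univ a : a ∈ ι e k ⁻¹' W)
  · intro z hzW hzT
    obtain ⟨j, a, rfl⟩ := exists_ι_eq e z
    exact Set.disjoint_left.mp (hW j).2 hzW hzT

theorem exists_subset_range_ι_of_isCompact (hemb : ∀ j, IsEmbedding (e j))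
    (hT1 : ∀ j, IsRelativelyT1 (e j)) {s : Set (SeqColim e)} (hs : IsCompact s) :
    ∃ k, s ⊆ Set.range (ι e k) := by
  by_contra! h
  choose z hzs hz using fun k => Set.not_subset.mp (h k)
  have hz_le : ∀ {j n}, j ≤ n → z n ∉ Set.range (ι e j) := fun h hn => hz _ (range_ι_mono e h hn)
  have hfin : ∀ k j, (ι e j ⁻¹' (z '' Set.Ici k)).Finite := by
    refine fun k j => (((Set.finite_Iio j).image z).preimage
      (ι_injective e (fun j => (hemb j).injective) j).injOn).subset ?_
    rintro a ⟨n, -, hn⟩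
    exact ⟨n, not_le.mp fun hjn => hz_le hjn ⟨a, hn.symm⟩, hn⟩
  have hdisj : ∀ k, Disjoint (Set.range (ι e k)) (z '' Set.Ici k) :=
    fun k => Set.disjoint_right.mpr fun _ ⟨n, hn, hzn⟩ => hzn ▸ hz_le hn
  choose W hWo hιW hWz using fun k =>
    exists_isOpen_range_ι_subset_disjoint e hemb hT1 (hfin k) (hdisj k)
  obtain ⟨t, ht⟩ := hs.elim_finite_subcover W hWo fun x _ => by
    obtain ⟨j, a, rfl⟩ := exists_ι_eq e x
    exact Set.mem_iUnion.mpr ⟨j, hιW j ⟨a, rfl⟩⟩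
  obtain ⟨i, hi, hzi⟩ := Set.mem_iUnion₂.mp (ht (hzs (t.sup id)))
  exact Set.disjoint_left.mp (hWz i) hzi ⟨t.sup id, Finset.le_sup (f := id) hi, rfl⟩

end SeqColim

open SeqColim in
/-- If `Y₁ ⊆ Y₂ ⊆ ⋯` is a sequence of relatively `T₁` inclusions of topological spaces and
`K` is a compact space, then every continuous map `K → colim Y` factors through some `Y k`. -/
theorem seqColim_compact_factors
    (e : ∀ k, C(Y k, Y (k + 1)))
    (hemb : ∀ k, Topology.IsEmbedding (e k))
    (hT1 : ∀ k, IsRelativelyT1 (e k))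
    {K : Type u} [TopologicalSpace K] [CompactSpace K]
    (f : C(K, SeqColim e)) :
    ∃ (k : ℕ) (g : C(K, Y k)), ∀ x : K, f x = SeqColim.ι e k (g x) := by
  obtain ⟨k, hk⟩ := exists_subset_range_ι_of_isCompact e hemb hT1 (isCompact_range f.continuous)
  choose g hg using fun x => hk (Set.mem_range_self x)
  have hcont : Continuous (ι e k ∘ g) := by
    simpa only [Function.comp_def, hg] using f.continuous
  exact ⟨k, ⟨g, (isEmbedding_ι e hemb k).continuous_iff.mpr hcont⟩, fun x => (hg x).symm⟩

end SeqColim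


end
end

section
/- Let X_* be a split simplicial space and let K be a compact topological space. Then every continuous map K → |X_*| factors through |Sk_n X_*| for some n. -/
noncomputable section

universe u

open scoped Topology
open CategoryTheory CategoryTheory.Limits Opposite Simplicial

namespace SimplexCategory

open scoped NNReal

/-- The topological simplex associated to `x : SimplexCategory` (as in the older Mathlib). -/
def toTopObj (x : SimplexCategory) := (setOf fun f : Fin (x.len + 1) → ℝ≥0 => ∑ i, f i = 1 : Set (Fin (x.len + 1) → ℝ≥0))

open Classical in
/-- A morphism in `SimplexCategory` induces a map on the associated topological spaces
(as in the older Mathlib). -/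
def toTopMap {x y : SimplexCategory} (f : x ⟶ y) (g : x.toTopObj) : y.toTopObj :=
  ⟨fun i => ∑ j ∈ Finset.univ.filter (f.toOrderHom · = i), g.1 j, by
    show ∑ i, ∑ j ∈ Finset.univ.filter (f.toOrderHom · = i), g.1 j = 1
    rw [Finset.sum_fiberwise]
    exact g.2⟩

end SimplexCategory

/-- The total space `∐ₙ Wₙ × Δⁿ` from which the geometric realization of a simplicial
space `W` is built. -/
def GeomRealPre (W : SimplicialObject TopCat.{u}) : Type u :=
  Σ n : SimplexCategory, W.obj (op n) × n.toTopObj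

instance (W : SimplicialObject TopCat.{u}) : TopologicalSpace (GeomRealPre W) :=
  inferInstanceAs (TopologicalSpace (Σ n : SimplexCategory, W.obj (op n) × n.toTopObj))

/-- The relation `(θ* x, t) ∼ (x, θ_* t)` generating the identifications made in the
geometric realization of a simplicial space. -/
def GeomRealRel (W : SimplicialObject TopCat.{u}) : GeomRealPre W → GeomRealPre W → Prop :=
  fun p q => ∃ θ : p.1 ⟶ q.1,
    p.2.1 = W.map θ.op q.2.1 ∧ q.2.2 = SimplexCategory.toTopMap θ p.2.2

/-- The geometric realization `|W| = (∐ₙ Wₙ × Δⁿ)/∼` of a simplicial space `W`,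
where `(θ* x, t) ∼ (x, θ_* t)` for all morphisms `θ` of the simplex category. -/
def GeomReal (W : SimplicialObject TopCat.{u}) : Type u :=
  Quot (GeomRealRel W)

instance (W : SimplicialObject TopCat.{u}) : TopologicalSpace (GeomReal W) :=
  inferInstanceAs (TopologicalSpace (Quot (GeomRealRel W)))

/-- The point of the geometric realization determined by a point of `Wₙ × Δⁿ`. -/
def GeomReal.mk (W : SimplicialObject TopCat.{u}) {n : SimplexCategory}
    (x : W.obj (op n)) (t : n.toTopObj) : GeomReal W :=
  Quot.mk _ ⟨n, x, t⟩

/-- The continuous map of geometric realizations induced by a map of simplicial spaces. -/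
def GeomReal.map {W V : SimplicialObject TopCat.{u}} (f : W ⟶ V) :
    C(GeomReal W, GeomReal V) where
  toFun := Quot.lift (fun p => GeomReal.mk V (f.app (op p.1) p.2.1) p.2.2)
    (by
      rintro ⟨m, x, t⟩ ⟨n, y, s⟩ ⟨θ, h1, h2⟩
      dsimp at h1 h2 ⊢
      apply Quot.sound
      refine ⟨θ, ?_, h2⟩
      dsimp
      rw [h1]
      exact ConcreteCategory.congr_hom (f.naturality θ.op) y)
  continuous_toFun := by
    apply continuous_quot_lift
    apply continuous_sigma
    intro n
    have h1 : Continuous fun xt : W.obj (op n) × n.toTopObj =>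
        (⟨n, f.app (op n) xt.1, xt.2⟩ : GeomRealPre V) :=
      continuous_sigmaMk.comp ((f.app (op n)).hom.continuous.prodMap continuous_id)
    exact continuous_quot_mk.comp h1

/-- The continuous map `|W| → X` induced by an augmentation `W ⟶ cX` to the constant
simplicial space at `X`. -/
def GeomReal.toAug {W : SimplicialObject TopCat.{u}} {X : TopCat.{u}}
    (e : W ⟶ (Functor.const _).obj X) : C(GeomReal W, X) where
  toFun := Quot.lift (fun p => e.app (op p.1) p.2.1)
    (by
      rintro ⟨m, x, t⟩ ⟨n, y, s⟩ ⟨θ, h1, h2⟩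
      dsimp at h1 ⊢
      rw [h1]
      exact ConcreteCategory.congr_hom (e.naturality θ.op) y)
  continuous_toFun := by
    apply continuous_quot_lift
    apply continuous_sigma
    intro n
    exact (e.app (op n)).hom.continuous.comp continuous_fst

section Split

open scoped NNReal

variable (W : SimplicialObject TopCat.{0})

/-- The index type for the splitting decomposition in level `k`: surjections `[k] ↠ [n]`
in the simplex category. -/
def SurjFrom (k : SimplexCategoryᵒᵖ) : Type :=
  Σ n : SimplexCategory, { s : k.unop ⟶ n // Function.Surjective s.toOrderHom }

/-- The canonical map `∐_{σ : [k] ↠ [n]} N_n → W_k` determined by a choice of subspaces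
`N n ⊆ W n`, sending the copy of `N_n` indexed by the surjection `σ` into `W_k` by the
degeneracy `σ*`. -/
def splitCanonicalMap (N : ∀ n : SimplexCategory, Set (W.obj (op n)))
    (k : SimplexCategoryᵒᵖ) (q : Σ p : SurjFrom k, ↥(N p.1)) : W.obj k :=
  W.map q.1.2.1.op q.2.1

/-- A simplicial space `W` is *split* (has free degeneracies) with respect to subspaces
`N n ⊆ W n` if in every level `k` the canonical map `∐_{σ : [k] ↠ [n]} N_n → W_k` is a
homeomorphism. -/
def IsSplitting (N : ∀ n : SimplexCategory, Set (W.obj (op n))) : Prop :=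
  ∀ k : SimplexCategoryᵒᵖ, IsHomeomorph (splitCanonicalMap W N k)

/-- The subspace of `W_k` of simplices coming from dimension at most `n`: the union of the
images of the maps `W_j → W_k` for `j ≤ n`.  These are the levels of the `n`-skeleton,
which agrees with `W` in dimensions `≤ n` and consists of the degenerate part of `W`
generated by dimensions `≤ n` above. -/
def SkSet (n : ℕ) (k : SimplexCategoryᵒᵖ) : Set (W.obj k) :=
  { x | ∃ (j : SimplexCategory) (_ : j.len ≤ n) (s : k.unop ⟶ j) (y : W.obj (op j)),
      x = W.map s.op y }

lemma skSet_map (n : ℕ) {k l : SimplexCategoryᵒᵖ} (θ : k ⟶ l) {x : W.obj k}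
    (hx : x ∈ SkSet W n k) : W.map θ x ∈ SkSet W n l := by
  obtain ⟨j, hj, s, y, rfl⟩ := hx
  refine ⟨j, hj, θ.unop ≫ s, y, ?_⟩
  have : (θ.unop ≫ s).op = s.op ≫ θ := rfl
  rw [this, W.map_comp]
  rfl

/-- The `n`-skeleton of a simplicial space `W`, the simplicial subspace of `W` agreeing
with `W` in dimensions `≤ n` and given by the degenerate part of `W` above. -/
def Sk (n : ℕ) : SimplicialObject TopCat.{0} where
  obj k := TopCat.of ↥(SkSet W n k)
  map {k l} θ := TopCat.ofHom ⟨fun x => ⟨W.map θ x.1, skSet_map W n θ x.2⟩,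
    Continuous.subtype_mk ((W.map θ).hom.continuous.comp continuous_subtype_val) _⟩
  map_id k := by
    apply TopCat.hom_ext
    apply ContinuousMap.ext
    rintro ⟨x, hx⟩
    apply Subtype.ext
    show W.map (𝟙 k) x = x
    rw [W.map_id]
    rfl
  map_comp {k l j} θ θ' := by
    apply TopCat.hom_ext
    apply ContinuousMap.ext
    rintro ⟨x, hx⟩
    apply Subtype.ext
    show W.map (θ ≫ θ') x = W.map θ' (W.map θ x)
    rw [W.map_comp]
    rfl

/-- The inclusion of the `n`-skeleton of `W` into `W`. -/
def skInclusion (n : ℕ) : Sk W n ⟶ W where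
  app k := TopCat.ofHom ⟨Subtype.val, continuous_subtype_val⟩
  naturality _ _ _ := rfl

lemma skSet_mono (n : ℕ) (k : SimplexCategoryᵒᵖ) : SkSet W n k ⊆ SkSet W (n + 1) k := by
  rintro x ⟨j, hj, s, y, hy⟩
  exact ⟨j, hj.trans (Nat.le_succ n), s, y, hy⟩

/-- The inclusion of the `n`-skeleton of `W` into the `(n+1)`-skeleton. -/
def skSuccInclusion (n : ℕ) : Sk W n ⟶ Sk W (n + 1) where
  app k := TopCat.ofHom ⟨fun x => ⟨x.1, skSet_mono W n k x.2⟩,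
    Continuous.subtype_mk continuous_subtype_val _⟩
  naturality _ _ _ := rfl

end Split

/-!
A splitting gives every point of `|W|` a unique representative `(y, u)` with `y ∈ N_j` and `u` an
interior point of `Δʲ`: restrict to the face of `Δᵐ` carrying the barycentric coordinates, then
strip off the degeneracy `σ` in `x = σ* y`. The realization of `Skₙ W` maps bijectively onto the
points whose representative has `j ≤ n`, and this map is closed, because closedness in `|W|` can be
tested on the interiors of the simplices. For compact `K`, choose one point of `f(K)` in each
dimension `j` that occurs: their simplex coordinates form a closed set of interior points all of
whose subsets are closed, so the points of `K` whose representative has these coordinates and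
dimension `> d` form closed sets, decreasing in `d`, with empty intersection. By compactness one of
them is empty, which bounds the dimensions occurring in `f(K)`.
-/

namespace SimplexCategory


variable {a b m : SimplexCategory}

lemma toTopMap_coe_apply (f : a ⟶ b) (t : a.toTopObj) (i : Fin (b.len + 1)) :
    (toTopMap f t).1 i = ∑ j ∈ Finset.univ.filter (f.toOrderHom · = i), t.1 j := rfl

lemma continuous_toTopMap (f : a ⟶ b) : Continuous (toTopMap f) :=
  Continuous.subtype_mk (continuous_pi fun _ => continuous_finsetSum _ fun j _ =>
    (continuous_apply j).comp continuous_subtype_val) _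

lemma toTopMap_coe_apply_of_injective {f : a ⟶ b} (hf : Function.Injective f.toOrderHom)
    (t : a.toTopObj) (j : Fin (a.len + 1)) : (toTopMap f t).1 (f.toOrderHom j) = t.1 j := by
  rw [toTopMap_coe_apply,
    Finset.sum_eq_single j (fun k hk hkj => absurd (hf (by simpa using hk)) hkj) (by simp)]

lemma toTopMap_coe_apply_of_notMem_range {f : a ⟶ b} (t : a.toTopObj) {i : Fin (b.len + 1)}
    (hi : i ∉ Set.range f.toOrderHom) : (toTopMap f t).1 i = 0 := by
  rw [toTopMap_coe_apply]
  exact Finset.sum_eq_zero fun j hj => absurd ⟨j, (Finset.mem_filter.1 hj).2⟩ hi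

lemma toTopMap_id (t : m.toTopObj) : toTopMap (𝟙 m) t = t :=
  Subtype.ext (funext (toTopMap_coe_apply_of_injective (f := 𝟙 m) Function.injective_id t))

lemma toTopMap_comp {c : SimplexCategory} (f : a ⟶ b) (g : b ⟶ c) (t : a.toTopObj) :
    toTopMap (f ≫ g) t = toTopMap g (toTopMap f t) := by
  refine Subtype.ext (funext fun i => ?_)
  simp only [toTopMap_coe_apply]
  rw [← Finset.sum_fiberwise_of_maps_to (g := f.toOrderHom)
    (t := Finset.univ.filter (g.toOrderHom · = i)) (by simp)]
  refine Finset.sum_congr rfl fun k hk => Finset.sum_congr ?_ fun _ _ => rfl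
  ext j
  simp only [Finset.mem_filter, Finset.mem_univ, true_and] at hk ⊢
  exact ⟨fun h => h.2, fun h => ⟨by rw [comp_toOrderHom, OrderHom.comp_coe, Function.comp_apply,
    h, hk], h⟩⟩

def support (t : m.toTopObj) : Finset (Fin (m.len + 1)) :=
  Finset.univ.filter (t.1 · ≠ 0)

lemma mem_support {t : m.toTopObj} {i : Fin (m.len + 1)} : i ∈ support t ↔ t.1 i ≠ 0 := by
  simp [support]

lemma support_subset_iff {t : m.toTopObj} {S : Finset (Fin (m.len + 1))} :
    support t ⊆ S ↔ ∀ i ∉ S, t.1 i = 0 := by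
  simp only [Finset.subset_iff, mem_support]
  exact ⟨fun h i hi => by_contra fun h0 => hi (h h0),
    fun h i hi => by_contra fun hS => hi (h i hS)⟩

lemma support_nonempty (t : m.toTopObj) : (support t).Nonempty := by
  by_contra h
  have h0 : ∀ i, t.1 i = 0 := fun i =>
    support_subset_iff.1 (Finset.not_nonempty_iff_eq_empty.1 h).le i (Finset.notMem_empty i)
  have h1 : ∑ i, t.1 i = 1 := t.2
  simp [h0] at h1

lemma isClosed_setOf_support_subset (S : Finset (Fin (m.len + 1))) :
    IsClosed ({t | support t ⊆ S} : Set m.toTopObj) := by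
  simp only [support_subset_iff, Set.ofPred_forall]
  exact isClosed_iInter fun i => isClosed_iInter fun _ =>
    isClosed_eq ((continuous_apply i).comp continuous_subtype_val) continuous_const

def IsInterior (t : m.toTopObj) : Prop := ∀ i, t.1 i ≠ 0

lemma isInterior_toTopMap {f : a ⟶ b} (hf : Function.Surjective f.toOrderHom)
    {t : a.toTopObj} (ht : IsInterior t) : IsInterior (toTopMap f t) := by
  intro i h0
  obtain ⟨j, rfl⟩ := hf i
  rw [toTopMap_coe_apply] at h0
  exact ht j ((Finset.sum_eq_zero_iff.1 h0) j (by simp))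

lemma support_toTopMap_of_isInterior {f : a ⟶ b} (hf : Function.Injective f.toOrderHom)
    {t : a.toTopObj} (ht : IsInterior t) :
    support (toTopMap f t) = Finset.univ.image f.toOrderHom := by
  ext i
  rw [mem_support, Finset.mem_image]
  refine ⟨fun h => by_contra fun hi => h (toTopMap_coe_apply_of_notMem_range t ?_), ?_⟩
  · rintro ⟨j, rfl⟩
    exact hi ⟨j, Finset.mem_univ j, rfl⟩
  · rintro ⟨j, -, rfl⟩
    rw [toTopMap_coe_apply_of_injective hf]
    exact ht j

def face (S : Finset (Fin (m.len + 1))) : SimplexCategory :=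
  mk (S.card - 1)

lemma card_eq_face_len_succ {S : Finset (Fin (m.len + 1))} (hS : S.Nonempty) :
    S.card = (face S).len + 1 := by
  have := hS.card_pos
  simp only [face, len_mk]
  omega

def faceInclusion (S : Finset (Fin (m.len + 1))) (hS : S.Nonempty) : face S ⟶ m :=
  Hom.mk (S.orderEmbOfFin (card_eq_face_len_succ hS)).toOrderHom

variable {S : Finset (Fin (m.len + 1))}

lemma strictMono_faceInclusion (hS : S.Nonempty) :
    StrictMono (faceInclusion S hS).toOrderHom :=
  (S.orderEmbOfFin (card_eq_face_len_succ hS)).strictMono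

lemma range_faceInclusion (hS : S.Nonempty) :
    Set.range (faceInclusion S hS).toOrderHom = S :=
  S.range_orderEmbOfFin (card_eq_face_len_succ hS)

def restrictFace (hS : S.Nonempty) (t : m.toTopObj) (ht : support t ⊆ S) : (face S).toTopObj :=
  ⟨fun i => t.1 (faceInclusion S hS |>.toOrderHom i), by
    show ∑ i, t.1 (faceInclusion S hS |>.toOrderHom i) = 1
    calc ∑ i, t.1 ((faceInclusion S hS).toOrderHom i) = ∑ j ∈ S, t.1 j := by
          conv_rhs => rw [← Finset.map_orderEmbOfFin_univ S (card_eq_face_len_succ hS)]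
          rw [Finset.sum_map]; rfl
      _ = 1 := by
          rw [← t.2]
          exact Finset.sum_subset (Finset.subset_univ _) fun i _ => support_subset_iff.1 ht i⟩

lemma restrictFace_coe_apply (hS : S.Nonempty) (t : m.toTopObj) (ht : support t ⊆ S) (i) :
    (restrictFace hS t ht).1 i = t.1 ((faceInclusion S hS).toOrderHom i) := rfl

lemma toTopMap_restrictFace (hS : S.Nonempty) (t : m.toTopObj) (ht : support t ⊆ S) :
    toTopMap (faceInclusion S hS) (restrictFace hS t ht) = t := by
  refine Subtype.ext (funext fun i => ?_)
  by_cases hi : i ∈ Set.range (faceInclusion S hS).toOrderHom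
  · obtain ⟨j, rfl⟩ := hi
    exact toTopMap_coe_apply_of_injective (strictMono_faceInclusion hS).injective _ j
  · rw [toTopMap_coe_apply_of_notMem_range _ hi, support_subset_iff.1 ht i
      (by rwa [← Finset.mem_coe, ← range_faceInclusion hS])]

lemma isInterior_restrictFace_support (t : m.toTopObj) :
    IsInterior (restrictFace (support_nonempty t) t subset_rfl) := fun i =>
  (mem_support (t := t)).1
    (Finset.orderEmbOfFin_mem (support t) (card_eq_face_len_succ (support_nonempty t)) i)

end SimplexCategory

open SimplexCategory

namespace GeomRealPre

variable {W : SimplicialObject TopCat.{u}}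

def restrictToSupport (p : GeomRealPre W) : GeomRealPre W :=
  ⟨face (support p.2.2), W.map (faceInclusion _ (support_nonempty p.2.2)).op p.2.1,
    restrictFace (support_nonempty p.2.2) p.2.2 subset_rfl⟩

def simplexPoint (p : GeomRealPre W) : Σ j : SimplexCategory, j.toTopObj :=
  ⟨p.1, p.2.2⟩

lemma rel_restrictToSupport (p : GeomRealPre W) : GeomRealRel W p.restrictToSupport p :=
  ⟨faceInclusion _ (support_nonempty p.2.2), rfl, (toTopMap_restrictFace _ _ subset_rfl).symm⟩

lemma restrictToSupport_toTopMap_of_strictMono {c m : SimplexCategory} {γ : c ⟶ m}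
    (hγ : StrictMono γ.toOrderHom) {u : c.toTopObj} (hu : IsInterior u) (x : W.obj (op m)) :
    restrictToSupport ⟨m, x, toTopMap γ u⟩ = ⟨c, W.map γ.op x, u⟩ := by
  have hsupp := support_toTopMap_of_isInterior hγ.injective hu
  have hval := toTopMap_coe_apply_of_injective hγ.injective u
  generalize toTopMap γ u = t at hsupp hval
  have hface : face (support t) = c := by
    ext
    rw [face, len_mk, hsupp, Finset.card_image_of_injective _ hγ.injective, Finset.card_univ,
      Fintype.card_fin, Nat.add_sub_cancel]
  subst hface
  have hγ_eq : γ = faceInclusion _ (support_nonempty t) := by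
    ext1
    refine OrderHom.ext _ _ (Finset.orderEmbOfFin_unique
      (card_eq_face_len_succ (support_nonempty t)) (fun i => ?_) hγ)
    rw [mem_support, hval]
    exact hu i
  have hu_eq : restrictFace (support_nonempty t) t subset_rfl = u :=
    Subtype.ext (funext fun i => by rw [restrictFace_coe_apply, ← hγ_eq, hval])
  change (⟨_, _, _⟩ : GeomRealPre W) = _
  rw [hu_eq, ← hγ_eq]

end GeomRealPre

namespace GeomReal

variable {W : SimplicialObject TopCat.{u}}

def restrictToFace {m : SimplexCategory} {S : Finset (Fin (m.len + 1))} (hS : S.Nonempty)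
    (p : ({p | support p.2 ⊆ S} : Set (W.obj (op m) × m.toTopObj))) :
    W.obj (op (face S)) × (face S).toTopObj :=
  (W.map (faceInclusion S hS).op p.1.1, restrictFace hS p.1.2 p.2)

lemma continuous_restrictToFace {m : SimplexCategory} {S : Finset (Fin (m.len + 1))}
    (hS : S.Nonempty) : Continuous (restrictToFace (W := W) hS) := by
  refine Continuous.prodMk ?_ (Continuous.subtype_mk ?_ _)
  · exact (W.map (faceInclusion S hS).op).hom.continuous.comp
      (continuous_fst.comp continuous_subtype_val)
  · exact continuous_pi fun i => (continuous_apply ((faceInclusion S hS).toOrderHom i)).comp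
      (continuous_subtype_val.comp (continuous_snd.comp continuous_subtype_val))

/-- Every point of `Wₘ × Δᵐ` is identified with an interior point of one of the finitely many
faces of `Δᵐ`, and restricting to a fixed face is continuous on the closed set of points it
carries. -/
lemma isClosed_of_interior_points (A : Set (GeomReal W))
    (D : ∀ m : SimplexCategory, Set (W.obj (op m) × m.toTopObj)) (hD : ∀ m, IsClosed (D m))
    (hDA : ∀ m (p : W.obj (op m) × m.toTopObj), p ∈ D m → GeomReal.mk W p.1 p.2 ∈ A)
    (hAD : ∀ m (x : W.obj (op m)) (t : m.toTopObj), IsInterior t → GeomReal.mk W x t ∈ A →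
      (x, t) ∈ D m) :
    IsClosed A := by
  refine (isQuotientMap_quot_mk (r := GeomRealRel W)).isClosed_preimage.1
    (isClosed_sigma_iff.2 fun m => ?_)
  have hcarried (S : Finset (Fin (m.len + 1))) :
      IsClosed ({p | support p.2 ⊆ S} : Set (W.obj (op m) × m.toTopObj)) :=
    (isClosed_setOf_support_subset S).preimage continuous_snd
  convert isClosed_iUnion_of_finite fun S => isClosed_iUnion_of_finite fun hS =>
    (hcarried S).isClosedEmbedding_subtypeVal.isClosedMap _
      ((hD (face S)).preimage (continuous_restrictToFace hS)) using 1
  ext ⟨x, t⟩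
  simp only [Set.mem_preimage, Set.mem_iUnion, Set.mem_image]
  constructor
  · intro h
    refine ⟨support t, support_nonempty t, ⟨(x, t), (subset_rfl : support t ⊆ support t)⟩,
      hAD _ _ _ (isInterior_restrictFace_support t) ?_, rfl⟩
    have e : GeomReal.mk W _ _ = GeomReal.mk W x t :=
      Quot.sound (GeomRealPre.rel_restrictToSupport ⟨m, x, t⟩)
    rw [e]
    exact h
  · rintro ⟨S, hS, ⟨p, hp⟩, hpD, rfl⟩
    have hrel : GeomRealRel W ⟨face S, restrictToFace hS ⟨(x, t), hp⟩⟩ ⟨m, x, t⟩ :=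
      ⟨faceInclusion S hS, rfl, (toTopMap_restrictFace hS t hp).symm⟩
    have e : GeomReal.mk W (restrictToFace hS ⟨(x, t), hp⟩).1
        (restrictToFace hS ⟨(x, t), hp⟩).2 = GeomReal.mk W x t := Quot.sound hrel
    have h := hDA _ _ hpD
    rw [e] at h
    exact h

end GeomReal


lemma bddAbove_range_of_isClosed_preimage {X ι : Type*} {σ : ι → Type*} [TopologicalSpace X]
    [CompactSpace X] (h : X → Σ i, σ i) (d : ι → ℕ)
    (hcl : ∀ T ⊆ Set.range h, (∀ i, (Sigma.mk i ⁻¹' T).Subsingleton) →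
      IsClosed (h ⁻¹' T)) :
    BddAbove (Set.range fun x => d (h x).1) := by
  by_contra hunb
  rw [not_bddAbove_iff] at hunb
  have : Nonempty X := let ⟨_, ⟨x, _⟩, _⟩ := hunb 0; ⟨x⟩
  let g : X → ι := fun x => (h x).1
  let s := Function.invFun g
  have hgs (x : X) : g (s (g x)) = g x := Function.invFun_eq ⟨x, rfl⟩
  -- `T k` keeps one value of `h` in each summand of index `i` with `k < d i` that `h` reaches.
  let T : ℕ → Set (Σ i, σ i) := fun k => {q | ∃ x, q = h (s (g x)) ∧ k < d (g x)}
  have hT (k : ℕ) : IsClosed (h ⁻¹' T k) := by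
    refine hcl _ (by rintro _ ⟨x, rfl, -⟩; exact ⟨_, rfl⟩)
      fun i a ⟨x, hx, _⟩ b ⟨y, hy, _⟩ => ?_
    have hxy : g x = g y := by
      rw [← hgs x, ← hgs y]
      exact (congrArg Sigma.fst hx).symm.trans (congrArg Sigma.fst hy : i = _)
    have hab := hx.trans ((congrArg (h ∘ s) hxy).trans hy.symm)
    exact eq_of_heq (Sigma.mk.inj_iff.1 hab).2
  obtain ⟨x, hx⟩ := IsCompact.nonempty_iInter_of_sequence_nonempty_isCompact_isClosed
    (fun k => h ⁻¹' T k)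
    (fun k => by rintro _ ⟨x, hx, hk⟩; exact ⟨x, hx, k.lt_succ_self.trans hk⟩)
    (fun k => by obtain ⟨_, ⟨x, rfl⟩, hk⟩ := hunb k; exact ⟨s (g x), x, rfl, hk⟩)
    (hT 0).isCompact hT
  obtain ⟨y, hy, hlt⟩ := Set.mem_iInter.1 hx (d (g x))
  have hxy : g x = g y := (congrArg Sigma.fst hy).trans (hgs y)
  exact lt_irrefl _ (hxy ▸ hlt)


namespace IsSplitting

variable {W : SimplicialObject TopCat.{0}} {N : ∀ n : SimplexCategory, Set (W.obj (op n))}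
  (hN : IsSplitting W N) {m j : SimplexCategory}

/-- The decomposition `x = σ* y` with `σ` surjective and `y ∈ N`. -/
def decomp (x : W.obj (op m)) : Σ p : SurjFrom (op m), ↥(N p.1) :=
  ((hN (op m)).homeomorph _).symm x

lemma decomp_map_of_mem (σ : m ⟶ j) (hσ : Function.Surjective σ.toOrderHom)
    {y : W.obj (op j)} (hy : y ∈ N j) :
    hN.decomp (W.map σ.op y) = ⟨⟨j, σ, hσ⟩, ⟨y, hy⟩⟩ :=
  ((hN (op m)).homeomorph _).symm_apply_eq.2 rfl

def dim (x : W.obj (op m)) : SimplexCategory := (hN.decomp x).1.1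

def degeneracy (x : W.obj (op m)) : m ⟶ hN.dim x := (hN.decomp x).1.2.1

def nondeg (x : W.obj (op m)) : W.obj (op (hN.dim x)) := (hN.decomp x).2.1

lemma surjective_degeneracy (x : W.obj (op m)) :
    Function.Surjective (hN.degeneracy x).toOrderHom :=
  (hN.decomp x).1.2.2

lemma nondeg_mem (x : W.obj (op m)) : hN.nondeg x ∈ N (hN.dim x) :=
  (hN.decomp x).2.2

lemma map_degeneracy_nondeg (x : W.obj (op m)) :
    W.map (hN.degeneracy x).op (hN.nondeg x) = x :=
  ((hN (op m)).homeomorph _).apply_symm_apply x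

lemma dim_map_of_mem (σ : m ⟶ j) (hσ : Function.Surjective σ.toOrderHom) {y : W.obj (op j)}
    (hy : y ∈ N j) : hN.dim (W.map σ.op y) = j := by
  rw [dim, decomp_map_of_mem hN σ hσ hy]

lemma dim_of_mem {y : W.obj (op j)} (hy : y ∈ N j) : hN.dim y = j := by
  simpa using hN.dim_map_of_mem (𝟙 j) Function.surjective_id hy

lemma dim_map_of_surjective (σ : m ⟶ j) (hσ : Function.Surjective σ.toOrderHom)
    (x : W.obj (op j)) : hN.dim (W.map σ.op x) = hN.dim x := by
  conv_lhs => rw [← hN.map_degeneracy_nondeg x, ← Functor.map_comp_apply, ← op_comp]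
  refine hN.dim_map_of_mem (σ ≫ hN.degeneracy x) ?_ (hN.nondeg_mem x)
  rw [comp_toOrderHom]
  exact (hN.surjective_degeneracy x).comp hσ

lemma len_dim_le (x : W.obj (op m)) : (hN.dim x).len ≤ m.len :=
  have := epi_iff_surjective.2 (hN.surjective_degeneracy x)
  len_le_of_epi (hN.degeneracy x)

lemma len_dim_map_le (s : m ⟶ j) (y : W.obj (op j)) : (hN.dim (W.map s.op y)).len ≤ j.len := by
  rw [← Limits.image.fac s, op_comp, Functor.map_comp_apply,
    hN.dim_map_of_surjective _ (epi_iff_surjective.1 inferInstance)]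
  exact (hN.len_dim_le _).trans (len_le_of_mono (Limits.image.ι s))

lemma len_dim_map_le_len_dim (f : m ⟶ j) (x : W.obj (op j)) :
    (hN.dim (W.map f.op x)).len ≤ (hN.dim x).len := by
  conv_lhs => rw [← hN.map_degeneracy_nondeg x, ← Functor.map_comp_apply, ← op_comp]
  exact hN.len_dim_map_le _ _

lemma mem_skSet_iff (n : ℕ) (x : W.obj (op m)) :
    x ∈ SkSet W n (op m) ↔ (hN.dim x).len ≤ n := by
  refine ⟨?_, fun h => ⟨_, h, _, _, (hN.map_degeneracy_nondeg x).symm⟩⟩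
  rintro ⟨j, hj, s, y, rfl⟩
  exact (hN.len_dim_map_le s y).trans hj

def normalize (p : GeomRealPre W) : GeomRealPre W :=
  ⟨hN.dim p.2.1, hN.nondeg p.2.1, toTopMap (hN.degeneracy p.2.1) p.2.2⟩

lemma rel_normalize (p : GeomRealPre W) : GeomRealRel W p (hN.normalize p) :=
  ⟨hN.degeneracy p.2.1, (hN.map_degeneracy_nondeg p.2.1).symm, rfl⟩

lemma normalize_map_of_mem (σ : m ⟶ j) (hσ : Function.Surjective σ.toOrderHom)
    {y : W.obj (op j)} (hy : y ∈ N j) (u : m.toTopObj) :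
    hN.normalize ⟨m, W.map σ.op y, u⟩ = ⟨j, y, toTopMap σ u⟩ := by
  unfold normalize dim nondeg degeneracy
  rw [hN.decomp_map_of_mem σ hσ hy]

lemma normalize_of_mem {y : W.obj (op j)} (hy : y ∈ N j) (u : j.toTopObj) :
    hN.normalize ⟨j, y, u⟩ = ⟨j, y, u⟩ := by
  simpa [toTopMap_id] using hN.normalize_map_of_mem (𝟙 j) Function.surjective_id hy u

lemma normalize_map_of_surjective (σ : m ⟶ j) (hσ : Function.Surjective σ.toOrderHom)
    (x : W.obj (op j)) (u : m.toTopObj) :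
    hN.normalize ⟨m, W.map σ.op x, u⟩ = hN.normalize ⟨j, x, toTopMap σ u⟩ := by
  have hsurj : Function.Surjective (σ ≫ hN.degeneracy x).toOrderHom := by
    rw [comp_toOrderHom]
    exact (hN.surjective_degeneracy x).comp hσ
  conv_lhs => rw [← hN.map_degeneracy_nondeg x, ← Functor.map_comp_apply, ← op_comp]
  conv_rhs => rw [← hN.map_degeneracy_nondeg x]
  rw [hN.normalize_map_of_mem _ hsurj (hN.nondeg_mem x),
    hN.normalize_map_of_mem _ (hN.surjective_degeneracy x) (hN.nondeg_mem x), toTopMap_comp]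

/-- The canonical representative `(y, u)` of the class of `p` in `|W|`: `y ∈ N` and `u` is an
interior point. -/
def canonPre (p : GeomRealPre W) : GeomRealPre W :=
  hN.normalize p.restrictToSupport

lemma canonPre_toTopMap_of_strictMono {c : SimplexCategory} {γ : c ⟶ m}
    (hγ : StrictMono γ.toOrderHom) {u : c.toTopObj} (hu : IsInterior u) (x : W.obj (op m)) :
    hN.canonPre ⟨m, x, toTopMap γ u⟩ = hN.normalize ⟨c, W.map γ.op x, u⟩ :=
  congrArg hN.normalize (GeomRealPre.restrictToSupport_toTopMap_of_strictMono hγ hu x)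

lemma canonPre_of_isInterior (x : W.obj (op m)) {u : m.toTopObj} (hu : IsInterior u) :
    hN.canonPre ⟨m, x, u⟩ = hN.normalize ⟨m, x, u⟩ := by
  simpa [toTopMap_id] using hN.canonPre_toTopMap_of_strictMono (γ := 𝟙 m) strictMono_id hu x

/-- Both sides restrict to the support of `t` and then factor the composite face map through
its image; the epi part is absorbed by `normalize`, the mono part by `restrictToSupport`. -/
lemma canonPre_eq_of_rel {p q : GeomRealPre W} (h : GeomRealRel W p q) :
    hN.canonPre p = hN.canonPre q := by
  obtain ⟨a, x, t⟩ := p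
  obtain ⟨b, z, s⟩ := q
  obtain ⟨θ, hxz, hst⟩ := h
  dsimp only at θ hxz hst
  rw [hxz, hst]
  set δ := faceInclusion _ (support_nonempty t)
  set t₀ := restrictFace (support_nonempty t) t subset_rfl
  set π := Limits.factorThruImage (δ ≫ θ)
  set ι := Limits.image.ι (δ ≫ θ)
  have hπ : Function.Surjective π.toOrderHom := epi_iff_surjective.1 inferInstance
  have hι : StrictMono ι.toOrderHom :=
    ι.toOrderHom.monotone.strictMono_of_injective (mono_iff_injective.1 inferInstance)
  have hx : W.map δ.op (W.map θ.op z) = W.map π.op (W.map ι.op z) := by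
    rw [← Functor.map_comp_apply, ← Functor.map_comp_apply, ← op_comp, ← op_comp,
      Limits.image.fac]
  have hs : toTopMap θ t = toTopMap ι (toTopMap π t₀) := by
    rw [← toTopMap_comp, Limits.image.fac, toTopMap_comp, toTopMap_restrictFace]
  change hN.normalize ⟨_, W.map δ.op (W.map θ.op z), t₀⟩ = _
  rw [hx, hs, hN.canonPre_toTopMap_of_strictMono hι
      (isInterior_toTopMap hπ (isInterior_restrictFace_support t)),
    hN.normalize_map_of_surjective _ hπ]

lemma eqvGen_canonPre (p : GeomRealPre W) : Relation.EqvGen (GeomRealRel W) p (hN.canonPre p) :=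
  .trans _ _ _ (.symm _ _ (.rel _ _ p.rel_restrictToSupport)) (.rel _ _ (hN.rel_normalize _))

def canon : GeomReal W → GeomRealPre W :=
  Quot.lift hN.canonPre fun _ _ => hN.canonPre_eq_of_rel

lemma mk_canon (z : GeomReal W) : Quot.mk _ (hN.canon z) = z := by
  induction z using Quot.ind with
  | _ p => exact (Quot.eqvGen_sound (hN.eqvGen_canonPre p)).symm

lemma canon_mem (z : GeomReal W) : (hN.canon z).2.1 ∈ N (hN.canon z).1 := by
  induction z using Quot.ind with
  | _ p => exact hN.nondeg_mem _

lemma isInterior_canon (z : GeomReal W) : IsInterior (hN.canon z).2.2 := by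
  induction z using Quot.ind with
  | _ p =>
    exact isInterior_toTopMap (hN.surjective_degeneracy _) (isInterior_restrictFace_support _)

lemma len_canon_mk_le (p : GeomRealPre W) :
    (hN.canon (Quot.mk _ p)).1.len ≤ (hN.dim p.2.1).len :=
  hN.len_dim_map_le_len_dim _ _

lemma canon_mk_of_isInterior (p : GeomRealPre W) (hp : IsInterior (hN.normalize p).2.2) :
    hN.canon (Quot.mk _ p) = hN.normalize p := by
  calc hN.canon (Quot.mk _ p) = hN.canonPre (hN.normalize p) :=
        hN.canonPre_eq_of_rel (hN.rel_normalize p)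
    _ = hN.normalize (hN.normalize p) := hN.canonPre_of_isInterior _ hp
    _ = hN.normalize p := hN.normalize_of_mem (hN.nondeg_mem _) _

lemma isClosed_skSet (hN : IsSplitting W N) (n : ℕ) (m : SimplexCategory) :
    IsClosed (SkSet W n (op m)) := by
  have hdim : IsClosed ({q | q.1.1.len ≤ n} : Set (Σ p : SurjFrom (op m), ↥(N p.1))) :=
    isClosed_sigma_iff.2 fun p => isClosed_const (p := p.1.len ≤ n)
  rw [show SkSet W n (op m) = hN.decomp ⁻¹' {q | q.1.1.len ≤ n} from
    Set.ext fun x => hN.mem_skSet_iff n x]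
  exact hdim.preimage ((hN (op m)).homeomorph _).symm.continuous

lemma len_canon_map_skInclusion_le (n : ℕ) (c : GeomReal (Sk W n)) :
    (hN.canon (GeomReal.map (skInclusion W n) c)).1.len ≤ n := by
  induction c using Quot.ind with
  | _ p => exact (hN.len_canon_mk_le _).trans ((hN.mem_skSet_iff n _).1 p.2.1.2)

lemma canon_mem_skSet (n : ℕ) {z : GeomReal W} (hz : (hN.canon z).1.len ≤ n) :
    (hN.canon z).2.1 ∈ SkSet W n (op (hN.canon z).1) :=
  (hN.mem_skSet_iff n _).2 (by rwa [hN.dim_of_mem (hN.canon_mem z)])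

def skLift (n : ℕ) (z : GeomReal W) (hz : (hN.canon z).1.len ≤ n) : GeomReal (Sk W n) :=
  Quot.mk _ ⟨(hN.canon z).1, ⟨(hN.canon z).2.1, hN.canon_mem_skSet n hz⟩, (hN.canon z).2.2⟩

lemma map_skLift (n : ℕ) (z : GeomReal W) (hz : (hN.canon z).1.len ≤ n) :
    GeomReal.map (skInclusion W n) (hN.skLift n z hz) = z :=
  hN.mk_canon z

/-- The steps from a point of `Skₙ W` to its canonical representative stay inside `Skₙ W`. -/
lemma skLift_map (n : ℕ) (c : GeomReal (Sk W n)) :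
    hN.skLift n (GeomReal.map (skInclusion W n) c) (hN.len_canon_map_skInclusion_le n c) = c := by
  induction c using Quot.ind with
  | _ p =>
  obtain ⟨m, ⟨x, hx⟩, t⟩ := p
  let δ := faceInclusion _ (support_nonempty t)
  let t₀ := restrictFace (support_nonempty t) t subset_rfl
  let y := W.map δ.op x
  have hy : y ∈ SkSet W n (op (face (support t))) := skSet_map W n δ.op hx
  have hface : GeomRealRel (Sk W n) ⟨_, ⟨y, hy⟩, t₀⟩ ⟨m, ⟨x, hx⟩, t⟩ :=
    ⟨δ, rfl, (toTopMap_restrictFace _ t subset_rfl).symm⟩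
  have hdeg : GeomRealRel (Sk W n) ⟨_, ⟨y, hy⟩, t₀⟩
      ⟨_, ⟨hN.nondeg y, hN.canon_mem_skSet n (hN.len_canon_map_skInclusion_le n
        (Quot.mk _ ⟨m, ⟨x, hx⟩, t⟩))⟩, toTopMap (hN.degeneracy y) _⟩ :=
    ⟨hN.degeneracy y, Subtype.ext (hN.map_degeneracy_nondeg y).symm, rfl⟩
  exact (Quot.sound hdeg).symm.trans (Quot.sound hface)

lemma injective_map_skInclusion (hN : IsSplitting W N) (n : ℕ) :
    Function.Injective (GeomReal.map (skInclusion W n)) := by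
  intro c₁ c₂ h
  rw [← hN.skLift_map n c₁, ← hN.skLift_map n c₂]
  congr 1

lemma isClosedMap_map_skInclusion (hN : IsSplitting W N) (n : ℕ) :
    IsClosedMap (GeomReal.map (skInclusion W n)) := by
  intro C hC
  refine GeomReal.isClosed_of_interior_points _
    (fun m => {p | ∃ h : p.1 ∈ SkSet W n (op m), GeomReal.mk (Sk W n) ⟨p.1, h⟩ p.2 ∈ C})
    (fun m => ?_) (fun m p ⟨h, hC⟩ => ⟨_, hC, rfl⟩) (fun m x t ht ⟨c, hc, hcx⟩ => ?_)
  · let P : Set (W.obj (op m) × m.toTopObj) := {p | p.1 ∈ SkSet W n (op m)}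
    have hP : IsClosed P := (hN.isClosed_skSet n m).preimage continuous_fst
    let g : P → GeomReal (Sk W n) :=
      fun q => GeomReal.mk (Sk W n) (⟨q.1.1, q.2⟩ : SkSet W n (op m)) q.1.2
    have hg : Continuous g := continuous_quot_mk.comp (continuous_sigmaMk.comp
      (((continuous_fst.comp continuous_subtype_val).subtype_mk _).prodMk
        (continuous_snd.comp continuous_subtype_val)))
    convert hP.isClosedEmbedding_subtypeVal.isClosedMap _ (hC.preimage hg) using 1
    ext p
    exact ⟨fun ⟨h, hp⟩ => ⟨⟨p, h⟩, hp, rfl⟩,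
      by rintro ⟨q, hq, rfl⟩; exact ⟨q.2, hq⟩⟩
  · have hx : x ∈ SkSet W n (op m) := by
      rw [hN.mem_skSet_iff]
      have := hN.len_canon_map_skInclusion_le n c
      rwa [hcx, GeomReal.mk, hN.canon_mk_of_isInterior ⟨m, x, t⟩
        (isInterior_toTopMap (hN.surjective_degeneracy x) ht)] at this
    have hlift : GeomReal.mk (Sk W n) ⟨x, hx⟩ t = c :=
      hN.injective_map_skInclusion n hcx.symm
    exact ⟨hx, hlift ▸ hc⟩

lemma continuous_simplexPoint_normalize (m : SimplexCategory) :
    Continuous fun p : W.obj (op m) × m.toTopObj =>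
      (hN.normalize ⟨m, p.1, p.2⟩).simplexPoint := by
  have hsum : Continuous fun q : Σ σ : SurjFrom (op m), ↥(N σ.1) × m.toTopObj =>
      (⟨q.1.1, toTopMap q.1.2.1 q.2.2⟩ : Σ j : SimplexCategory, j.toTopObj) :=
    continuous_sigma fun σ => (continuous_sigmaMk (σ := fun j : SimplexCategory => j.toTopObj)
      (i := σ.1)).comp ((continuous_toTopMap σ.2.1).comp continuous_snd)
  exact hsum.comp (Homeomorph.sigmaProdDistrib.continuous.comp
    ((((hN (op m)).homeomorph _).symm.continuous.comp continuous_fst).prodMk continuous_snd))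

lemma isClosed_preimage_simplexPoint_canon {T : Set (Σ j : SimplexCategory, j.toTopObj)}
    (hT : IsClosed T) (hT_int : ∀ q ∈ T, IsInterior q.2) :
    IsClosed ((fun z => (hN.canon z).simplexPoint) ⁻¹' T) := by
  refine GeomReal.isClosed_of_interior_points _
    (fun m => (fun p : W.obj (op m) × m.toTopObj =>
      (hN.normalize ⟨m, p.1, p.2⟩).simplexPoint) ⁻¹' T)
    (fun m => hT.preimage (hN.continuous_simplexPoint_normalize m)) (fun m p hp => ?_)
    (fun m x t ht h => ?_)
  · rw [Set.mem_preimage, GeomReal.mk, hN.canon_mk_of_isInterior ⟨m, p⟩ (hT_int _ hp)]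
    exact hp
  · rwa [Set.mem_preimage, GeomReal.mk, hN.canon_mk_of_isInterior ⟨m, x, t⟩
      (isInterior_toTopMap (hN.surjective_degeneracy x) ht)] at h

lemma bddAbove_len_canon {K : Type*} [TopologicalSpace K] [CompactSpace K] (f : C(K, GeomReal W)) :
    BddAbove (Set.range fun a => (hN.canon (f a)).1.len) := by
  refine bddAbove_range_of_isClosed_preimage (fun a => (hN.canon (f a)).simplexPoint) len
    fun T hT hfib => (hN.isClosed_preimage_simplexPoint_canon ?_ ?_).preimage f.continuous
  · exact isClosed_sigma_iff.2 fun j => (hfib j).isClosed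
  · rintro _ hq
    obtain ⟨a, rfl⟩ := hT hq
    exact hN.isInterior_canon (f a)

end IsSplitting

/-- If `W` is a split simplicial space and `K` is a compact space, then every continuous
map `K → |W|` factors through the realization `|Skₙ W|` of a skeleton. -/
theorem compact_factors_through_skeleton
    (W : SimplicialObject TopCat.{0})
    (hW : ∃ N : ∀ n : SimplexCategory, Set (W.obj (op n)), IsSplitting W N)
    {K : Type} [TopologicalSpace K] [CompactSpace K] (f : C(K, GeomReal W)) :
    ∃ (n : ℕ) (g : C(K, GeomReal (Sk W n))),
      (GeomReal.map (skInclusion W n)).comp g = f := by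
  obtain ⟨N, hN⟩ := hW
  obtain ⟨n, hn⟩ := hN.bddAbove_len_canon f
  have hle (a : K) : (hN.canon (f a)).1.len ≤ n := hn ⟨a, rfl⟩
  have hτ : Topology.IsClosedEmbedding (GeomReal.map (skInclusion W n)) :=
    .of_continuous_injective_isClosedMap (GeomReal.map _).continuous
      (hN.injective_map_skInclusion n) (hN.isClosedMap_map_skInclusion n)
  refine ⟨n, ⟨fun a => hN.skLift n (f a) (hle a), hτ.isInducing.continuous_iff.2 ?_⟩,
    ContinuousMap.ext fun a => hN.map_skLift n _ (hle a)⟩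
  simpa only [Function.comp_def, hN.map_skLift] using f.continuous
end
end
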